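/- Let n, m, l be natural numbers with n + m + l odd, and set P₁ := n² + m² + l² − 2nm − 2nl − 2ml. Then I_{n,m,l,3} = −(n+m−l−4)‼ · (n−m+l−4)‼ · (−n+m+l−4)‼ · (P₁³ − 8·P₁² + (16 − 48·n·m·l)·P₁ − 64·n·m·l·(n+m+l−3)), where the three double-factorial arguments are odd integers (possibly negative) and ‼ denotes the extended double factorial. -/

import Mathlib

/-!
Integrating `(p e^{-2x²})'` over `ℝ` and using `H_n' = 2n H_{n-1}` and
`2x H_n = H_{n+1} + 2n H_{n-1}` gives the recurrence
`I_{n+1,m,l,k} = m I_{n,m-1,l,k} + l I_{n,m,l-1,k} + k I_{n,m,l,k-1} - n I_{n-1,m,l,k}`.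
Together with the symmetry of `I` in its indices and `I_{0,0,0,0} = 1` it determines every
`I_{n,m,l,k}`. For `k ≤ 3` the closed forms `(n+m-l-k-1)‼ (n-m+l-k-1)‼ (-n+m+l-k-1)‼ · S_k(n,m,l)`
satisfy the same recurrence: after `(t+2)‼ = (t+2) t‼` this is a polynomial identity in `n, m, l`.
Induction on `n+m+l+k` then gives the closed forms, in particular the one for `k = 3`.
-/

open MeasureTheory Real

/-- Physicists' Hermite polynomials: `H 0 x = 1`, `H 1 x = 2x`,
`H (n+1) x = 2x * H n x - 2n * H (n-1) x`. -/
noncomputable def hermiteP : ℕ → ℝ → ℝ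
  | 0, _ => 1
  | 1, x => 2 * x
  | n + 2, x => 2 * x * hermiteP (n + 1) x - 2 * ((n : ℝ) + 1) * hermiteP n x

/-- Extended double factorial of an odd integer `a`:
`a‼ = 2^((a+1)/2) * Γ(a/2 + 1) / √π`. -/
noncomputable def ddfact (a : ℤ) : ℝ :=
  (2 : ℝ) ^ ((a + 1) / 2) * Real.Gamma ((a : ℝ) / 2 + 1) / Real.sqrt π

/-- `I n m l k = √(2/π) ∫ H_n(x) H_m(x) H_l(x) H_k(x) e^{-2x²} dx`. -/
noncomputable def I (n m l k : ℕ) : ℝ :=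
  Real.sqrt (2 / π) *
    ∫ x : ℝ,
      hermiteP n x * hermiteP m x * hermiteP l x * hermiteP k x * Real.exp (-2 * x ^ 2)

open Polynomial

noncomputable def hermitePoly : ℕ → ℝ[X]
  | 0 => 1
  | 1 => 2 * X
  | n + 2 => 2 * X * hermitePoly (n + 1) - 2 * ((n : ℝ[X]) + 1) * hermitePoly n

local notation "H" => hermitePoly

theorem eval_hermitePoly : ∀ (n : ℕ) (x : ℝ), (H n).eval x = hermiteP n x
  | 0, x => by simp [hermitePoly, hermiteP]
  | 1, x => by simp [hermitePoly, hermiteP]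
  | n + 2, x => by
      simp [hermitePoly, hermiteP, eval_hermitePoly (n + 1) x, eval_hermitePoly n x]

theorem X_mul_hermitePoly (n : ℕ) : 2 * X * H n = H (n + 1) + 2 * (n : ℝ[X]) * H (n - 1) := by
  cases n with
  | zero => simp [hermitePoly]
  | succ n => rw [hermitePoly]; push_cast; ring

theorem derivative_hermitePoly : ∀ n : ℕ, derivative (H n) = 2 * (n : ℝ[X]) * H (n - 1)
  | 0 => by simp [hermitePoly]
  | 1 => by simp [hermitePoly]
  | n + 2 => by
      rw [hermitePoly]
      simp only [derivative_sub, derivative_mul, derivative_ofNat, derivative_X,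
        derivative_add, derivative_natCast, derivative_one, derivative_hermitePoly (n + 1),
        derivative_hermitePoly n, Nat.add_sub_cancel]
      push_cast
      linear_combination (2 * ((n : ℝ[X]) + 1)) * X_mul_hermitePoly n

theorem integrable_eval_mul_exp_neg_mul_sq {b : ℝ} (hb : 0 < b) (p : ℝ[X]) :
    Integrable fun x : ℝ => p.eval x * rexp (-b * x ^ 2) := by
  induction p using Polynomial.induction_on' with
  | add p q hp hq => simpa [add_mul, Pi.add_def] using hp.add hq
  | monomial i a =>
      have hi := (integrable_rpow_mul_exp_neg_mul_sq hb
        (neg_one_lt_zero.trans_le (Nat.cast_nonneg i))).const_mul a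
      simpa [mul_assoc] using hi

noncomputable def gaussianIntegral : ℝ[X] →ₗ[ℝ] ℝ where
  toFun p := ∫ x, p.eval x * rexp (-2 * x ^ 2)
  map_add' p q := by
    simp only [eval_add, add_mul]
    exact integral_add (integrable_eval_mul_exp_neg_mul_sq two_pos p)
      (integrable_eval_mul_exp_neg_mul_sq two_pos q)
  map_smul' a p := by simp [mul_assoc, integral_const_mul]

theorem gaussianIntegral_apply (p : ℝ[X]) :
    gaussianIntegral p = ∫ x, p.eval x * rexp (-2 * x ^ 2) := rfl

/-- Integration by parts: `(p e^{-2x²})' = (p' - 4xp) e^{-2x²}` is integrable with integral `0`. -/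
theorem gaussianIntegral_derivative (p : ℝ[X]) :
    gaussianIntegral (derivative p) = 4 * gaussianIntegral (X * p) := by
  have hderiv : ∀ x : ℝ, HasDerivAt (fun y => p.eval y * rexp (-2 * y ^ 2))
      ((derivative p - (4 : ℝ) • (X * p)).eval x * rexp (-2 * x ^ 2)) x := by
    intro x
    have hexp :
        HasDerivAt (fun y : ℝ => rexp (-2 * y ^ 2)) (rexp (-2 * x ^ 2) * (-4 * x)) x := by
      refine ((hasDerivAt_pow 2 x).const_mul (-2)).exp.congr_deriv ?_
      ring
    refine ((p.hasDerivAt x).fun_mul hexp).congr_deriv ?_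
    simp only [eval_sub, eval_smul, eval_mul, eval_X, smul_eq_mul]
    ring
  have h : gaussianIntegral (derivative p - (4 : ℝ) • (X * p)) = 0 :=
    integral_eq_zero_of_hasDerivAt_of_integrable hderiv
      (integrable_eval_mul_exp_neg_mul_sq two_pos _) (integrable_eval_mul_exp_neg_mul_sq two_pos p)
  rwa [map_sub, map_smul, smul_eq_mul, sub_eq_zero] at h

theorem gaussianIntegral_hermitePoly_mul_derivative (n : ℕ) (q : ℝ[X]) :
    gaussianIntegral (H n * derivative q) =
      2 * gaussianIntegral (H (n + 1) * q) + 2 * n * gaussianIntegral (H (n - 1) * q) := by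
  have hpoly : H n * derivative q = derivative (H n * q) - (4 : ℝ) • (X * (H n * q)) +
      (2 : ℝ) • (H (n + 1) * q) + (2 * n : ℝ) • (H (n - 1) * q) := by
    rw [derivative_mul, derivative_hermitePoly]
    simp only [smul_eq_C_mul, map_mul, map_ofNat, map_natCast]
    linear_combination (2 * q) * X_mul_hermitePoly n
  rw [hpoly, map_add, map_add, map_sub, gaussianIntegral_derivative]
  simp only [map_smul, smul_eq_mul]
  ring

theorem I_eq_gaussianIntegral (n m l k : ℕ) :
    I n m l k = √(2 / π) * gaussianIntegral (H n * H m * H l * H k) := by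
  simp only [I, gaussianIntegral_apply, eval_mul, eval_hermitePoly]

theorem I_succ (n m l k : ℕ) :
    I (n + 1) m l k = m * I n (m - 1) l k + l * I n m (l - 1) k + k * I n m l (k - 1) -
      n * I (n - 1) m l k := by
  have hderiv : H n * derivative (H m * H l * H k) =
      (2 * m : ℝ) • (H n * H (m - 1) * H l * H k) + (2 * l : ℝ) • (H n * H m * H (l - 1) * H k) +
        (2 * k : ℝ) • (H n * H m * H l * H (k - 1)) := by
    simp only [derivative_mul, derivative_hermitePoly, smul_eq_C_mul, map_mul, map_ofNat,
      map_natCast]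
    ring
  have h := gaussianIntegral_hermitePoly_mul_derivative n (H m * H l * H k)
  rw [hderiv, map_add, map_add, map_smul, map_smul, map_smul] at h
  simp only [I_eq_gaussianIntegral, smul_eq_mul, ← mul_assoc] at h ⊢
  linear_combination (-√(2 / π) / 2) * h

theorem I_swap12 (n m l k : ℕ) : I n m l k = I m n l k := by
  unfold I; congr 2; funext x; ring

theorem I_swap13 (n m l k : ℕ) : I n m l k = I l m n k := by
  unfold I; congr 2; funext x; ring

theorem I_swap14 (n m l k : ℕ) : I n m l k = I k m l n := by
  unfold I; congr 2; funext x; ring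

theorem I_zero_zero_zero_zero : I 0 0 0 0 = 1 := by
  simp only [I, hermiteP, one_mul, integral_gaussian]
  rw [← Real.sqrt_mul (by positivity), div_mul_div_cancel₀ (by positivity), div_self two_ne_zero,
    Real.sqrt_one]

theorem ddfact_add_two {t : ℤ} (ht : t ≠ -2) : ddfact (t + 2) = (t + 2) * ddfact t := by
  have hΓ : (t : ℝ) / 2 + 1 ≠ 0 := by
    intro h
    exact ht (by exact_mod_cast (by linarith : (t : ℝ) = -2))
  rw [ddfact, ddfact, show (t + 2 + 1) / 2 = (t + 1) / 2 + 1 by omega,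
    zpow_add_one₀ two_ne_zero, Int.cast_add, Int.cast_ofNat,
    show ((t : ℝ) + 2) / 2 + 1 = ((t : ℝ) / 2 + 1) + 1 by ring, Real.Gamma_add_one hΓ]
  ring

theorem ddfact_neg_one : ddfact (-1) = 1 := by
  norm_num [ddfact, Real.Gamma_one_half_eq, (Real.sqrt_pos.2 Real.pi_pos).ne']

theorem ddfact_neg_three : ddfact (-3) = -1 := by
  have h := ddfact_add_two (t := -3) (by norm_num)
  norm_num [ddfact_neg_one] at h
  linarith

noncomputable def P1 (a b c : ℝ) : ℝ := a ^ 2 + b ^ 2 + c ^ 2 - 2 * a * b - 2 * a * c - 2 * b * c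

/-- The polynomial factor `S_k` of `I_{n,m,l,k}`; `-S_3` is the bracket in `I4_three_eq`. -/
noncomputable def cofactor : ℕ → ℝ → ℝ → ℝ → ℝ
  | 0, _, _, _ => 1
  | 1, a, b, c => -P1 a b c
  | 2, a, b, c => (P1 a b c - 1) ^ 2 - 16 * a * b * c
  | 3, a, b, c => -(P1 a b c ^ 3 - 8 * P1 a b c ^ 2 + (16 - 48 * a * b * c) * P1 a b c -
      64 * a * b * c * (a + b + c - 3))
  | _ + 4, _, _, _ => 0

noncomputable def closedForm (k : ℕ) (n m l : ℤ) : ℝ :=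
  ddfact (n + m - l - k - 1) * ddfact (n - m + l - k - 1) * ddfact (-n + m + l - k - 1) *
    cofactor k n m l

theorem cofactor_swap12 (k : ℕ) (a b c : ℝ) : cofactor k a b c = cofactor k b a c := by
  rcases k with _ | _ | _ | _ | k <;> simp only [cofactor, P1] <;> ring

theorem cofactor_swap13 (k : ℕ) (a b c : ℝ) : cofactor k a b c = cofactor k c b a := by
  rcases k with _ | _ | _ | _ | k <;> simp only [cofactor, P1] <;> ring

theorem closedForm_swap12 (k : ℕ) (n m l : ℤ) : closedForm k n m l = closedForm k m n l := by
  simp only [closedForm, cofactor_swap12 k m]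
  ring_nf

theorem closedForm_swap13 (k : ℕ) (n m l : ℤ) : closedForm k n m l = closedForm k l m n := by
  simp only [closedForm, cofactor_swap13 k l]
  ring_nf

theorem cofactor_recurrence {k : ℕ} (hk : k ≤ 3) (a b c : ℝ) :
    (a + b - c - k) * (a - b + c - k) * cofactor k (a + 1) b c =
      b * (a - b + c - k) * cofactor k a (b - 1) c + c * (a + b - c - k) * cofactor k a b (c - 1) +
        k * ((a + b - c - k) * (a - b + c - k) * (-a + b + c - k)) * cofactor (k - 1) a b c -
        a * (-a + b + c - k) * cofactor k (a - 1) b c := by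
  interval_cases k <;> simp only [cofactor, P1] <;> push_cast <;> ring

theorem closedForm_eq {k : ℕ} {n m l : ℤ} (x y z : ℤ) (hx : n + m - l - k - 1 = x)
    (hy : n - m + l - k - 1 = y) (hz : -n + m + l - k - 1 = z) :
    closedForm k n m l = ddfact x * ddfact y * ddfact z * cofactor k n m l := by
  rw [closedForm, hx, hy, hz]

theorem closedForm_succ {k : ℕ} (hk : k ≤ 3) {n m l : ℤ} (hpar : Odd (n + m + l + k)) :
    closedForm k (n + 1) m l = m * closedForm k n (m - 1) l + l * closedForm k n m (l - 1) +
      k * closedForm (k - 1) n m l - n * closedForm k (n - 1) m l := by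
  -- Every closed form below is `a‼ b‼ c‼` times a polynomial, by `(t+2)‼ = (t+2) t‼` for odd `t`.
  obtain ⟨a, ha⟩ : ∃ a, a = n + m - l - k - 2 := ⟨_, rfl⟩
  obtain ⟨b, hb⟩ : ∃ b, b = n - m + l - k - 2 := ⟨_, rfl⟩
  obtain ⟨c, hc⟩ : ∃ c, c = -n + m + l - k - 2 := ⟨_, rfl⟩
  rw [Int.odd_iff] at hpar
  have hk_term : (k : ℝ) * closedForm (k - 1) n m l =
      k * (ddfact (a + 2) * ddfact (b + 2) * ddfact (c + 2) * cofactor (k - 1) n m l) := by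
    rcases k with _ | k
    · simp
    · rw [closedForm_eq (a + 2) (b + 2) (c + 2) (by omega) (by omega) (by omega)]
  rw [hk_term, closedForm_eq (a + 2) (b + 2) c (by omega) (by omega) (by omega),
    closedForm_eq a (b + 2) c (by omega) (by omega) (by omega),
    closedForm_eq (a + 2) b c (by omega) (by omega) (by omega),
    closedForm_eq a b (c + 2) (by omega) (by omega) (by omega),
    ddfact_add_two (by omega : a ≠ -2), ddfact_add_two (by omega : b ≠ -2),
    ddfact_add_two (by omega : c ≠ -2)]
  subst ha hb hc
  have h := cofactor_recurrence hk n m l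
  push_cast at h ⊢
  linear_combination
    ddfact (n + m - l - k - 2) * ddfact (n - m + l - k - 2) * ddfact (-n + m + l - k - 2) * h

theorem natCast_mul_eq_of_pos {x y : ℝ} (m : ℕ) (h : 0 < m → x = y) : (m : ℝ) * x = m * y := by
  rcases m.eq_zero_or_pos with rfl | hm
  · simp
  · rw [h hm]

theorem I_succ_eq_closedForm {n m l k : ℕ} (hk : k ≤ 3) (hpar : Even (n + 1 + m + l + k))
    (ih : ∀ n' m' l' k' : ℕ, n' + m' + l' + k' < n + 1 + m + l + k → k' ≤ 3 →
      Even (n' + m' + l' + k') → I n' m' l' k' = closedForm k' n' m' l') :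
    I (n + 1) m l k = closedForm k ((n + 1 : ℕ) : ℤ) m l := by
  rw [Nat.even_iff] at hpar
  have hm : (m : ℝ) * I n (m - 1) l k = m * closedForm k n (m - 1) l :=
    natCast_mul_eq_of_pos m fun hm => by
      rw [ih n (m - 1) l k (by omega) hk (Nat.even_iff.2 (by omega)), Nat.cast_pred hm]
  have hl : (l : ℝ) * I n m (l - 1) k = l * closedForm k n m (l - 1) :=
    natCast_mul_eq_of_pos l fun hl => by
      rw [ih n m (l - 1) k (by omega) hk (Nat.even_iff.2 (by omega)), Nat.cast_pred hl]
  have hk' : (k : ℝ) * I n m l (k - 1) = k * closedForm (k - 1) n m l :=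
    natCast_mul_eq_of_pos k fun _ =>
      ih n m l (k - 1) (by omega) (by omega) (Nat.even_iff.2 (by omega))
  have hn : (n : ℝ) * I (n - 1) m l k = n * closedForm k (n - 1) m l :=
    natCast_mul_eq_of_pos n fun hn => by
      rw [ih (n - 1) m l k (by omega) hk (Nat.even_iff.2 (by omega)), Nat.cast_pred hn]
  rw [I_succ, Nat.cast_succ, closedForm_succ hk (Int.odd_iff.2 (by omega))]
  push_cast
  linear_combination hm + hl + hk' - hn

theorem I_eq_closedForm (n m l k : ℕ) (hk : k ≤ 3) (hpar : Even (n + m + l + k)) :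
    I n m l k = closedForm k n m l := by
  induction hT : n + m + l + k using Nat.strong_induction_on generalizing n m l k with
  | _ T ih =>
  have ih' : ∀ n' m' l' k' : ℕ, n' + m' + l' + k' < T → k' ≤ 3 →
      Even (n' + m' + l' + k') → I n' m' l' k' = closedForm k' n' m' l' :=
    fun n' m' l' k' hlt hk' hpar' => ih _ hlt n' m' l' k' hk' hpar' rfl
  subst hT
  -- `I_succ` lowers a positive first index; otherwise swap a positive index into first place.
  rcases n with _ | n
  · rcases m with _ | m
    · rcases l with _ | l
      · interval_cases k
        · simp [I_zero_zero_zero_zero, closedForm, cofactor, ddfact_neg_one]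
        · exact absurd hpar (by decide)
        · rw [I_swap14, I_succ]
          norm_num [I_zero_zero_zero_zero, closedForm, cofactor, P1, ddfact_neg_three]
        · exact absurd hpar (by decide)
      · rw [I_swap13, closedForm_swap13]
        exact I_succ_eq_closedForm hk (by simpa using hpar) fun n' m' l' k' hlt => ih' n' m' l' k' (by omega)
    · rw [I_swap12, closedForm_swap12]
      exact I_succ_eq_closedForm hk (by simpa using hpar) fun n' m' l' k' hlt => ih' n' m' l' k' (by omega)
  · exact I_succ_eq_closedForm hk hpar ih'

theorem I4_three_eq (n m l : ℕ) (h : Odd (n + m + l))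
    (P₁ : ℝ)
    (hP₁ : P₁ = (n : ℝ) ^ 2 + (m : ℝ) ^ 2 + (l : ℝ) ^ 2 - 2 * n * m - 2 * n * l - 2 * m * l) :
    I n m l 3 =
      -(ddfact ((n : ℤ) + m - l - 4) * ddfact ((n : ℤ) - m + l - 4) *
          ddfact (-(n : ℤ) + m + l - 4) *
        (P₁ ^ 3 - 8 * P₁ ^ 2 + (16 - 48 * n * m * l) * P₁ -
          64 * n * m * l * ((n : ℝ) + m + l - 3))) := by
  rw [I_eq_closedForm n m l 3 le_rfl (h.add_odd (by decide)),
    closedForm_eq ((n : ℤ) + m - l - 4) ((n : ℤ) - m + l - 4) (-(n : ℤ) + m + l - 4)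
      (by omega) (by omega) (by omega),
    cofactor, P1, hP₁]
  push_cast
  ring
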